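/- Let A be a Banach algebra which possesses a dense, proper left ideal. Then: (i) A has no finitely-generated, closed, maximal left ideals; (ii) A has no finitely-generated, closed left ideals of finite codimension. -/

import Mathlib

open scoped BigOperators

variable {A : Type*}

/-- `I` is a left ideal of the (not necessarily unital) complex algebra `A`:
a linear subspace closed under left multiplication by arbitrary elements of `A`. -/
def IsLeftIdeal [NonUnitalRing A] [Module ℂ A] (I : Submodule ℂ A) : Prop :=
  ∀ a : A, ∀ x ∈ I, a * x ∈ I

/-- The set `A♯x₁ + ⋯ + A♯xₙ`, where `A♯` is the (conditional) unitisation of `A`: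
its elements are exactly the sums `∑ᵢ (aᵢ * xᵢ + cᵢ • xᵢ)` with `aᵢ ∈ A`, `cᵢ ∈ ℂ`.
No closure is taken. -/
def genSet [NonUnitalRing A] [Module ℂ A] {n : ℕ} (x : Fin n → A) : Set A :=
  {y | ∃ (a : Fin n → A) (c : Fin n → ℂ), y = ∑ i, (a i * x i + c i • x i)}

/-- A left ideal `I` of `A` is finitely generated if `I = A♯x₁ + ⋯ + A♯xₙ`
for some `n ∈ ℕ` and `x₁, …, xₙ ∈ A`. -/
def IsFinGenLeftIdeal [NonUnitalRing A] [Module ℂ A] (I : Submodule ℂ A) : Prop :=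
  ∃ (n : ℕ) (x : Fin n → A), (I : Set A) = genSet x

set_option linter.unusedSectionVars false
set_option maxHeartbeats 1000000

section phi
variable [NonUnitalNormedRing A] [NormedSpace ℂ A] [IsScalarTower ℂ A A] [SMulCommClass ℂ A A]

def philin {n : ℕ} (x : Fin n → A) : ((Fin n → A) × (Fin n → ℂ)) →ₗ[ℂ] A where
  toFun p := ∑ i, (p.1 i * x i + p.2 i • x i)
  map_add' p q := by
    simp only [Prod.fst_add, Prod.snd_add, Pi.add_apply, add_mul, add_smul]
    rw [← Finset.sum_add_distrib]
    exact Finset.sum_congr rfl fun i _ => by abel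
  map_smul' c p := by
    simp only [Prod.smul_fst, Prod.smul_snd, Pi.smul_apply, RingHom.id_apply,
      Finset.smul_sum, smul_add, smul_mul_assoc, smul_eq_mul, mul_smul]

lemma philin_bound {n : ℕ} (x : Fin n → A) (p : (Fin n → A) × (Fin n → ℂ)) :
    ‖philin x p‖ ≤ (∑ i, 2 * ‖x i‖) * ‖p‖ := by
  show ‖∑ i, (p.1 i * x i + p.2 i • x i)‖ ≤ _
  calc ‖∑ i, (p.1 i * x i + p.2 i • x i)‖ ≤ ∑ i, ‖p.1 i * x i + p.2 i • x i‖ :=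
        norm_sum_le _ _
    _ ≤ ∑ i, 2 * ‖x i‖ * ‖p‖ := by
        refine Finset.sum_le_sum fun i _ => ?_
        have h1 : ‖p.1 i * x i‖ ≤ ‖p‖ * ‖x i‖ :=
          le_trans (norm_mul_le _ _)
            (by gcongr; exact (norm_le_pi_norm p.1 i).trans (norm_fst_le p))
        have h2 : ‖p.2 i • x i‖ ≤ ‖p‖ * ‖x i‖ := by
          rw [norm_smul]
          gcongr
          exact (norm_le_pi_norm p.2 i).trans (norm_snd_le p)
        calc ‖p.1 i * x i + p.2 i • x i‖ ≤ ‖p.1 i * x i‖ + ‖p.2 i • x i‖ := norm_add_le _ _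
          _ ≤ ‖p‖ * ‖x i‖ + ‖p‖ * ‖x i‖ := add_le_add h1 h2
          _ = 2 * ‖x i‖ * ‖p‖ := by ring
    _ = (∑ i, 2 * ‖x i‖) * ‖p‖ := by rw [Finset.sum_mul]

noncomputable def phi {n : ℕ} (x : Fin n → A) : ((Fin n → A) × (Fin n → ℂ)) →L[ℂ] A :=
  (philin x).mkContinuous (∑ i, 2 * ‖x i‖) (philin_bound x)

lemma phi_apply {n : ℕ} (x : Fin n → A) (p) :
    phi x p = ∑ i, (p.1 i * x i + p.2 i • x i) := rfl

lemma mem_genSet_iff {n : ℕ} (x : Fin n → A) (u : A) :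
    u ∈ genSet x ↔ ∃ p, phi x p = u := by
  constructor
  · rintro ⟨a, c, rfl⟩; exact ⟨(a, c), rfl⟩
  · rintro ⟨p, rfl⟩; exact ⟨p.1, p.2, rfl⟩

lemma phi_sub_apply {n : ℕ} (x y : Fin n → A) (p) :
    phi x p - phi y p = phi (x - y) p := by
  simp only [phi_apply, Pi.sub_apply, mul_sub, smul_sub, ← Finset.sum_sub_distrib]
  exact Finset.sum_congr rfl fun i _ => by abel

/-- membership of values of `phi` in a left-ideal submodule containing the `w i`. -/
lemma phi_mem {n : ℕ} {S : Submodule ℂ A} (hS : IsLeftIdeal S) {w : Fin n → A}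
    (hw : ∀ i, w i ∈ S) (p) : phi w p ∈ S := by
  rw [phi_apply]
  exact Submodule.sum_mem _ fun i _ =>
    Submodule.add_mem _ (hS _ _ (hw i)) (Submodule.smul_mem _ _ (hw i))

lemma mul_phi_mem {n : ℕ} (w : Fin n → A) (a : A) (p) :
    ∃ q, phi w q = a * phi w p := by
  refine ⟨(fun i => a * p.1 i + p.2 i • a, 0), ?_⟩
  rw [phi_apply, phi_apply, Finset.mul_sum]
  refine Finset.sum_congr rfl fun i _ => ?_
  simp only [Pi.zero_apply, zero_smul, add_zero, add_mul, mul_add, mul_assoc,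
    smul_mul_assoc, mul_smul_comm]

lemma x_mem_genSet {n : ℕ} (x : Fin n → A) (i : Fin n) : x i ∈ genSet x := by
  refine ⟨0, Pi.single i 1, ?_⟩
  simp [Pi.single_apply, ite_smul, Finset.sum_ite_eq']
end phi

lemma surj_stab {E F : Type*} [NormedAddCommGroup E] [NormedSpace ℂ E] [CompleteSpace E]
    [NormedAddCommGroup F] [NormedSpace ℂ F] [CompleteSpace F]
    (f : E →L[ℂ] F) (hf : Function.Surjective f) :
    ∃ ε > 0, ∀ g : E →L[ℂ] F, ‖f - g‖ < ε → Function.Surjective g := by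
  obtain ⟨C, hC0, hC⟩ := f.exists_preimage_norm_le hf
  refine ⟨(2 * C)⁻¹, by positivity, fun g hg v => ?_⟩
  choose s hs hsn using hC
  set T : F → F := fun w => (f - g) (s w) with hT
  have hTle : ∀ w : F, ‖T w‖ ≤ 2⁻¹ * ‖w‖ := by
    intro w
    calc ‖(f - g) (s w)‖ ≤ ‖f - g‖ * ‖s w‖ := (f - g).le_opNorm _
      _ ≤ (2 * C)⁻¹ * (C * ‖w‖) := by
          apply mul_le_mul hg.le (hsn w) (norm_nonneg _) (by positivity)
      _ = 2⁻¹ * ‖w‖ := by field_simp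
  set seq : ℕ → F := fun k => T^[k] v with hseqdef
  have hseq : ∀ k, ‖seq k‖ ≤ 2⁻¹ ^ k * ‖v‖ := by
    intro k
    induction k with
    | zero => simp [hseqdef]
    | succ k ih =>
      have : seq (k+1) = T (seq k) := Function.iterate_succ_apply' T k v
      rw [this]
      calc ‖T (seq k)‖ ≤ 2⁻¹ * ‖seq k‖ := hTle _
        _ ≤ 2⁻¹ * (2⁻¹ ^ k * ‖v‖) := by nlinarith
        _ = 2⁻¹ ^ (k+1) * ‖v‖ := by ring
  set w : ℕ → E := fun k => s (seq k) with hw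
  have hsummable : Summable w := by
    apply Summable.of_norm_bounded (g := fun k => C * ‖v‖ * 2⁻¹ ^ k)
      (((summable_geometric_of_lt_one (by norm_num) (by norm_num))).mul_left (C * ‖v‖))
    intro k
    calc ‖w k‖ ≤ C * ‖seq k‖ := hsn _
      _ ≤ C * (2⁻¹ ^ k * ‖v‖) := by nlinarith [hseq k, hC0]
      _ = C * ‖v‖ * 2⁻¹ ^ k := by ring
  refine ⟨∑' k, w k, ?_⟩
  have hgS : HasSum (fun k => g (w k)) (g (∑' k, w k)) := (hsummable.hasSum).mapL g
  have hterm : ∀ k, g (w k) = seq k - seq (k + 1) := by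
    intro k
    have h1 : seq (k+1) = (f - g) (w k) := Function.iterate_succ_apply' T k v
    have h2 : f (w k) = seq k := hs _
    rw [h1]; simp [h2]
  have htend1 : Filter.Tendsto (fun N => ∑ k ∈ Finset.range N, g (w k)) Filter.atTop
      (nhds (g (∑' k, w k))) := hgS.tendsto_sum_nat
  have htend2 : Filter.Tendsto (fun N => ∑ k ∈ Finset.range N, g (w k)) Filter.atTop
      (nhds v) := by
    have hps : ∀ N, ∑ k ∈ Finset.range N, g (w k) = seq 0 - seq N := by
      intro N
      simp only [hterm]
      exact Finset.sum_range_sub' seq N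
    simp only [hps]
    have hseq0 : Filter.Tendsto seq Filter.atTop (nhds 0) := by
      apply squeeze_zero_norm hseq
      simpa using (tendsto_pow_atTop_nhds_zero_of_lt_one (by norm_num : (0:ℝ) ≤ 2⁻¹)
        (by norm_num : (2⁻¹:ℝ) < 1)).mul_const ‖v‖
    have : Filter.Tendsto (fun N => seq 0 - seq N) Filter.atTop (nhds (seq 0 - 0)) :=
      Filter.Tendsto.sub tendsto_const_nhds hseq0
    simpa [hseqdef] using this
  exact (tendsto_nhds_unique htend1 htend2)

section main
variable [NonUnitalNormedRing A] [NormedSpace ℂ A] [IsScalarTower ℂ A A]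
  [SMulCommClass ℂ A A] [CompleteSpace A]

lemma perturb (I : Submodule ℂ A) (hIl : IsLeftIdeal I) (hIc : IsClosed (I : Set A))
    {n : ℕ} (x : Fin n → A) (hgen : (I : Set A) = genSet x) :
    ∃ δ > 0, ∀ y : Fin n → A, (∀ i, y i ∈ I) → (∀ i, ‖x i - y i‖ < δ) →
      (I : Set A) = genSet y := by
  haveI : CompleteSpace I := hIc.completeSpace_coe
  have hmemx : ∀ p, phi x p ∈ I := by
    intro p
    have : phi x p ∈ genSet x := ⟨p.1, p.2, rfl⟩
    rw [← SetLike.mem_coe, hgen]; exact this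
  set fx := (phi x).codRestrict I hmemx with hfx
  have hfxsurj : Function.Surjective fx := by
    rintro ⟨v, hv⟩
    rw [← SetLike.mem_coe, hgen, mem_genSet_iff] at hv
    obtain ⟨p, hp⟩ := hv
    exact ⟨p, Subtype.ext hp⟩
  obtain ⟨ε, hε, hst⟩ := surj_stab fx hfxsurj
  refine ⟨ε / (2 * n + 2), by positivity, fun y hyI hyd => ?_⟩
  have hmemy : ∀ p, phi y p ∈ I := fun p => phi_mem hIl hyI p
  set fy := (phi y).codRestrict I hmemy with hfy
  have hnorm : ‖fx - fy‖ < ε := by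
    have hb : ∀ p, ‖(fx - fy) p‖ ≤ (∑ _i : Fin n, 2 * (ε / (2 * n + 2))) * ‖p‖ := by
      intro p
      have : ‖(fx - fy) p‖ = ‖phi x p - phi y p‖ := rfl
      rw [this, phi_sub_apply]
      calc ‖phi (x - y) p‖ ≤ (∑ i, 2 * ‖(x - y) i‖) * ‖p‖ := philin_bound _ p
        _ ≤ (∑ _i : Fin n, 2 * (ε / (2 * n + 2))) * ‖p‖ := by
            apply mul_le_mul_of_nonneg_right _ (norm_nonneg p)
            refine Finset.sum_le_sum fun i _ => ?_
            rw [Pi.sub_apply]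
            exact mul_le_mul_of_nonneg_left (hyd i).le (by norm_num)
    have hle : ‖fx - fy‖ ≤ ∑ _i : Fin n, 2 * (ε / (2 * n + 2)) :=
      (fx - fy).opNorm_le_bound (Finset.sum_nonneg fun i _ => by positivity) hb
    calc ‖fx - fy‖ ≤ ∑ _i : Fin n, 2 * (ε / (2 * n + 2)) := hle
      _ = n * (2 * (ε / (2 * n + 2))) := by rw [Finset.sum_const, Finset.card_fin]; ring
      _ < ε := by
          have ht : ε / (2 * (n:ℝ) + 2) > 0 := by positivity
          have he : ε = ε / (2 * (n:ℝ) + 2) * (2 * n + 2) := by field_simp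
          nlinarith [ht]
  have hfysurj := hst fy hnorm
  apply Set.Subset.antisymm
  · intro u hu
    obtain ⟨p, hp⟩ := hfysurj ⟨u, hu⟩
    have : phi y p = u := congrArg Subtype.val hp
    rw [mem_genSet_iff]; exact ⟨p, this⟩
  · intro u hu
    rw [mem_genSet_iff] at hu
    obtain ⟨p, rfl⟩ := hu
    exact hmemy p
end main

section main2
variable [NonUnitalNormedRing A] [NormedSpace ℂ A] [IsScalarTower ℂ A A]
  [SMulCommClass ℂ A A] [CompleteSpace A]

lemma dense_inter (B : Submodule ℂ A) (hBl : IsLeftIdeal B) (hBd : Dense (B : Set A))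
    (I : Submodule ℂ A) (hIl : IsLeftIdeal I) (hIc : IsClosed (I : Set A))
    {n : ℕ} (x : Fin n → A) (hgen : (I : Set A) = genSet x)
    {m : ℕ} (b : Fin m → A) (hbB : ∀ j, b j ∈ B)
    (hsum : ∀ a : A, ∃ p, a - phi b p ∈ I) :
    ∀ u ∈ I, ∀ ε > 0, ∃ v, v ∈ B ∧ v ∈ I ∧ ‖u - v‖ < ε := by
  haveI : CompleteSpace I := hIc.completeSpace_coe
  have hmemx : ∀ p, phi x p ∈ I := by
    intro p
    have : phi x p ∈ genSet x := ⟨p.1, p.2, rfl⟩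
    rw [← SetLike.mem_coe, hgen]; exact this
  set fx := (phi x).codRestrict I hmemx with hfx
  have hfxsurj : Function.Surjective fx := by
    rintro ⟨v, hv⟩
    rw [← SetLike.mem_coe, hgen, mem_genSet_iff] at hv
    obtain ⟨p, hp⟩ := hv
    exact ⟨p, Subtype.ext hp⟩
  obtain ⟨K, hK0, hK⟩ := fx.exists_preimage_norm_le hfxsurj
  set Ψ : (((Fin m → A) × (Fin m → ℂ)) × I) →L[ℂ] A := (phi b).coprod I.subtypeL with hΨ
  have hΨsurj : Function.Surjective Ψ := by
    intro a
    obtain ⟨p, hp⟩ := hsum a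
    exact ⟨(p, ⟨a - phi b p, hp⟩), by simp [hΨ]⟩
  obtain ⟨K₀, hK₀0, hK₀⟩ := Ψ.exists_preimage_norm_le hΨsurj
  set δ : ℝ := 1 / (4 * (n + 1) * K * K₀) with hδdef
  have hδ0 : 0 < δ := by rw [hδdef]; positivity
  have hβex : ∀ i : Fin n, ∃ β, β ∈ B ∧ ‖x i - β‖ < δ := by
    intro i
    have := Metric.mem_closure_iff.mp (hBd (x i)) δ hδ0
    obtain ⟨β, hβ1, hβ2⟩ := this
    exact ⟨β, hβ1, by rwa [← dist_eq_norm]⟩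
  choose β hβB hβd using hβex
  have hqex : ∀ i : Fin n, ∃ q, Ψ q = x i - β i ∧ ‖q‖ ≤ K₀ * ‖x i - β i‖ := fun i => hK₀ _
  choose q hq hqn using hqex
  set mm : Fin n → A := fun i => ((q i).2 : A) with hmm
  have hmmI : ∀ i, mm i ∈ I := fun i => (q i).2.2
  have hmmn : ∀ i, ‖mm i‖ ≤ K₀ * δ := by
    intro i
    calc ‖mm i‖ ≤ ‖q i‖ := (norm_snd_le (q i))
      _ ≤ K₀ * ‖x i - β i‖ := hqn i
      _ ≤ K₀ * δ := mul_le_mul_of_nonneg_left (hβd i).le hK₀0.le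
  have hxmm : ∀ i, (x - mm) i ∈ B := by
    intro i
    have h := hq i
    simp only [hΨ, ContinuousLinearMap.coprod_apply, Submodule.subtypeL_apply] at h
    have h3 : phi b (q i).1 = x i - β i - mm i := by rw [← h]; abel
    have h2 : (x - mm) i = β i + phi b (q i).1 := by rw [Pi.sub_apply, h3]; abel
    rw [h2]
    exact Submodule.add_mem _ (hβB i) (phi_mem hBl hbB _)
  have hcombo : (n : ℝ) * (2 * (K₀ * δ)) * K ≤ 2⁻¹ := by
    rw [hδdef]
    have hD : (0:ℝ) < 4 * ((n:ℝ) + 1) * K * K₀ := by positivity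
    rw [div_eq_inv_mul, mul_one]
    have hkey : (n : ℝ) * (2 * (K₀ * (4 * ((n:ℝ) + 1) * K * K₀)⁻¹)) * K * (4 * ((n:ℝ) + 1) * K * K₀) ≤ 2⁻¹ * (4 * ((n:ℝ) + 1) * K * K₀) := by
      have hinv : (4 * ((n:ℝ) + 1) * K * K₀) * (4 * ((n:ℝ) + 1) * K * K₀)⁻¹ = 1 :=
        mul_inv_cancel₀ (ne_of_gt hD)
      calc (n : ℝ) * (2 * (K₀ * (4 * ((n:ℝ) + 1) * K * K₀)⁻¹)) * K * (4 * ((n:ℝ) + 1) * K * K₀)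
          = (n : ℝ) * 2 * K₀ * K * ((4 * ((n:ℝ) + 1) * K * K₀) * (4 * ((n:ℝ) + 1) * K * K₀)⁻¹) := by ring
        _ = (n : ℝ) * 2 * K₀ * K := by rw [hinv]; ring
        _ ≤ 2⁻¹ * (4 * ((n:ℝ) + 1) * K * K₀) := by nlinarith [hK0, hK₀0, (Nat.cast_nonneg n : (0:ℝ) ≤ n)]
    exact le_of_mul_le_mul_right (by linarith [hkey]) hD
  have key : ∀ u ∈ I, ∃ v, v ∈ I ∧ u - v ∈ B ∧ ‖v‖ ≤ 2⁻¹ * ‖u‖ := by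
    intro u hu
    obtain ⟨p, hp, hpn⟩ := hK ⟨u, hu⟩
    have hpn' : ‖p‖ ≤ K * ‖u‖ := by
      have : ‖(⟨u, hu⟩ : I)‖ = ‖u‖ := Submodule.coe_norm ⟨u, hu⟩
      rwa [this] at hpn
    refine ⟨phi mm p, phi_mem hIl hmmI p, ?_, ?_⟩
    · have hu' : u = phi x p := (congrArg Subtype.val hp).symm
      have hsub : u - phi mm p = phi (x - mm) p := by rw [hu', phi_sub_apply]
      rw [hsub]
      exact phi_mem hBl hxmm p
    · calc ‖phi mm p‖ ≤ (∑ i, 2 * ‖mm i‖) * ‖p‖ := philin_bound mm p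
        _ ≤ (∑ _i : Fin n, 2 * (K₀ * δ)) * (K * ‖u‖) := by
            have hsumle : (∑ i, 2 * ‖mm i‖) ≤ ∑ _i : Fin n, 2 * (K₀ * δ) :=
              Finset.sum_le_sum fun i _ => mul_le_mul_of_nonneg_left (hmmn i) (by norm_num)
            exact mul_le_mul hsumle hpn' (norm_nonneg _)
              (Finset.sum_nonneg fun i _ => by positivity)
        _ = ((n : ℝ) * (2 * (K₀ * δ)) * K) * ‖u‖ := by
            rw [Finset.sum_const, Finset.card_fin]; ring
        _ ≤ 2⁻¹ * ‖u‖ := mul_le_mul_of_nonneg_right hcombo (norm_nonneg u)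
  have iter : ∀ k : ℕ, ∀ u ∈ I, ∃ v, v ∈ I ∧ u - v ∈ B ∧ ‖v‖ ≤ 2⁻¹ ^ k * ‖u‖ := by
    intro k
    induction k with
    | zero => intro u hu; exact ⟨u, hu, by simp, by simp⟩
    | succ k ih =>
      intro u hu
      obtain ⟨v, hvI, hvB, hvn⟩ := ih u hu
      obtain ⟨v', hv'I, hv'B, hv'n⟩ := key v hvI
      refine ⟨v', hv'I, ?_, ?_⟩
      · have : u - v' = (u - v) + (v - v') := by abel
        rw [this]; exact Submodule.add_mem _ hvB hv'B
      · calc ‖v'‖ ≤ 2⁻¹ * ‖v‖ := hv'n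
          _ ≤ 2⁻¹ * (2⁻¹ ^ k * ‖u‖) := by nlinarith
          _ = 2⁻¹ ^ (k + 1) * ‖u‖ := by ring
  intro u hu ε hε
  obtain ⟨k, hk⟩ := exists_pow_lt_of_lt_one (show (0:ℝ) < ε / (‖u‖ + 1) by positivity)
    (show (2⁻¹:ℝ) < 1 by norm_num)
  obtain ⟨v, hvI, hvB, hvn⟩ := iter k u hu
  refine ⟨u - v, hvB, Submodule.sub_mem _ hu hvI, ?_⟩
  have : ‖u - (u - v)‖ = ‖v‖ := by rw [show u - (u - v) = v by abel]
  rw [this]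
  have h1 : (0:ℝ) < ‖u‖ + 1 := by positivity
  have h2 : ε / (‖u‖ + 1) * ‖u‖ < ε / (‖u‖ + 1) * (‖u‖ + 1) :=
    mul_lt_mul_of_pos_left (by linarith) (by positivity)
  have h3 : ε / (‖u‖ + 1) * (‖u‖ + 1) = ε := div_mul_cancel₀ ε (ne_of_gt h1)
  have h4 : (2:ℝ)⁻¹ ^ k * ‖u‖ ≤ ε / (‖u‖ + 1) * ‖u‖ :=
    mul_le_mul_of_nonneg_right hk.le (norm_nonneg u)
  linarith [hvn]
end main2

section main3
variable [NonUnitalNormedRing A] [NormedSpace ℂ A] [IsScalarTower ℂ A A]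
  [SMulCommClass ℂ A A] [CompleteSpace A]

lemma phi_eq_philin {n : ℕ} (x : Fin n → A) (p) : phi x p = philin x p := rfl

lemma subset_B (B : Submodule ℂ A) (hBl : IsLeftIdeal B) (hBd : Dense (B : Set A))
    (I : Submodule ℂ A) (hIl : IsLeftIdeal I) (hIc : IsClosed (I : Set A))
    {n : ℕ} (x : Fin n → A) (hgen : (I : Set A) = genSet x)
    {m : ℕ} (b : Fin m → A) (hbB : ∀ j, b j ∈ B)
    (hsum : ∀ a : A, ∃ p, a - phi b p ∈ I) : I ≤ B := by
  obtain ⟨δ, hδ0, hpert⟩ := perturb I hIl hIc x hgen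
  have hxI : ∀ i, x i ∈ I := fun i => by
    rw [← SetLike.mem_coe, hgen]; exact x_mem_genSet x i
  have hyex : ∀ i, ∃ y, y ∈ B ∧ y ∈ I ∧ ‖x i - y‖ < δ := fun i =>
    dense_inter B hBl hBd I hIl hIc x hgen b hbB hsum (x i) (hxI i) δ hδ0
  choose y hyB hyI hyd using hyex
  have hI' := hpert y hyI hyd
  intro u hu
  have hmem : u ∈ genSet y := by rw [← hI']; exact hu
  rw [mem_genSet_iff] at hmem
  obtain ⟨p, rfl⟩ := hmem
  exact phi_mem hBl hyB p

lemma eq_top_of_dense_closed (S : Submodule ℂ A) (h1 : Dense (S : Set A))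
    (h2 : IsClosed (S : Set A)) : S = ⊤ := by
  rw [Submodule.eq_top_iff']
  intro a
  have h3 := h1.closure_eq
  rw [h2.closure_eq] at h3
  rw [← SetLike.mem_coe, h3]; trivial

theorem stmt3aux (B : Submodule ℂ A) (hB : IsLeftIdeal B) (hBdense : Dense (B : Set A))
    (hBproper : B ≠ ⊤) :
    (∀ I : Submodule ℂ A, IsLeftIdeal I → IsClosed (I : Set A) → I ≠ ⊤ →
      (∀ J : Submodule ℂ A, IsLeftIdeal J → I ≤ J → J = I ∨ J = ⊤) →
      ¬ IsFinGenLeftIdeal I)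
    ∧
    (∀ I : Submodule ℂ A, IsLeftIdeal I → IsClosed (I : Set A) →
      FiniteDimensional ℂ (A ⧸ I) → ¬ IsFinGenLeftIdeal I) := by
  constructor
  · -- (i) maximal case
    rintro I hIl hIc hIne hImax ⟨n, x, hgen⟩
    have hBnotle : ¬ B ≤ I := by
      intro h
      exact hIne (eq_top_of_dense_closed I (hBdense.mono h) hIc)
    obtain ⟨b₀, hb₀B, hb₀I⟩ := SetLike.not_le_iff_exists.mp hBnotle
    set bv : Fin 1 → A := fun _ => b₀ with hbv
    set R : Submodule ℂ A := LinearMap.range (philin bv) with hR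
    have hb₀R : b₀ ∈ R := by
      refine ⟨(0, fun _ => 1), ?_⟩
      show ∑ i : Fin 1, ((0:A) * bv i + (1:ℂ) • bv i) = b₀
      simp [hbv]
    set J := I ⊔ R with hJ
    have hJl : IsLeftIdeal J := by
      intro a u hu
      rw [hJ, Submodule.mem_sup] at hu ⊢
      obtain ⟨v, hv, w, hw, rfl⟩ := hu
      obtain ⟨p, hp⟩ := hw
      obtain ⟨q, hq⟩ := mul_phi_mem bv a p
      refine ⟨a * v, hIl a v hv, a * w, ⟨q, ?_⟩, by rw [mul_add]⟩
      rw [← phi_eq_philin, hq, phi_eq_philin, hp]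
    rcases hImax J hJl le_sup_left with hJI | hJtop
    · exact hb₀I (hJI ▸ Submodule.mem_sup_right hb₀R)
    · have hsum : ∀ a : A, ∃ p, a - phi bv p ∈ I := by
        intro a
        have ha : a ∈ J := by rw [hJtop]; trivial
        rw [hJ, Submodule.mem_sup] at ha
        obtain ⟨v, hv, w, hw, rfl⟩ := ha
        obtain ⟨p, hp⟩ := hw
        refine ⟨p, ?_⟩
        rw [phi_eq_philin, hp]
        simpa using hv
      have hle := subset_B B hB hBdense I hIl hIc x hgen bv (fun _ => hb₀B) hsum
      rcases hImax B hB hle with hBI | hBtop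
      · refine hIne (eq_top_of_dense_closed I ?_ hIc)
        rw [← hBI]; exact hBdense
      · exact hBproper hBtop
  · -- (ii) finite codimension case
    rintro I hIl hIc hfd ⟨n, x, hgen⟩
    haveI : IsClosed (I : Set A) := hIc
    set π := I.mkQ with hπ
    have hπcont : Continuous π := continuous_quot_mk
    set T : Submodule ℂ (A ⧸ I) := Submodule.map π B with hT
    have hTdense : Dense (T : Set (A ⧸ I)) := by
      intro q
      obtain ⟨a, rfl⟩ := Submodule.mkQ_surjective I q
      have h1 : a ∈ closure (B : Set A) := hBdense a
      have h2 : π a ∈ π '' closure (B : Set A) := ⟨a, h1, rfl⟩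
      have h3 : π '' closure (B : Set A) ⊆ closure (π '' (B : Set A)) :=
        image_closure_subset_closure_image hπcont
      have h4 : ⇑π '' (B : Set A) ⊆ (T : Set (A ⧸ I)) := by
        rintro y ⟨b, hb, rfl⟩; exact Submodule.mem_map_of_mem hb
      exact closure_mono h4 (h3 h2)
    haveI := hfd
    have hTtop : T = ⊤ := by
      have hcl : IsClosed (T : Set (A ⧸ I)) := T.closed_of_finiteDimensional
      rw [Submodule.eq_top_iff']
      intro q
      have h3 := hTdense.closure_eq
      rw [hcl.closure_eq] at h3
      rw [← SetLike.mem_coe, h3]; trivial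
    set d := Module.finrank ℂ (A ⧸ I) with hd
    set bas := Module.finBasis ℂ (A ⧸ I) with hbas
    have hbex : ∀ j : Fin d, ∃ b, b ∈ B ∧ π b = bas j := by
      intro j
      have : bas j ∈ T := by rw [hTtop]; trivial
      obtain ⟨b, hb, hb2⟩ := this
      exact ⟨b, hb, hb2⟩
    choose bb hbbB hbbq using hbex
    have hsum : ∀ a : A, ∃ p, a - phi bb p ∈ I := by
      intro a
      have hsp : π a ∈ Submodule.span ℂ (Set.range fun j => π (bb j)) := by
        have : (fun j => π (bb j)) = fun j => bas j := funext fun j => hbbq j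
        rw [this]
        have hb := bas.span_eq
        rw [show (Set.range fun j => bas j) = Set.range bas from rfl, hb]
        trivial
      rw [Finsupp.mem_span_range_iff_exists_finsupp] at hsp
      obtain ⟨c, hc⟩ := hsp
      rw [Finsupp.sum_fintype _ _ (fun j => zero_smul ℂ (π (bb j)))] at hc
      refine ⟨(0, fun j => c j), ?_⟩
      have hphi : phi bb (0, fun j => c j) = ∑ j, c j • bb j := by
        rw [phi_apply]
        exact Finset.sum_congr rfl fun j _ => by simp
      rw [hphi]
      have hπs : π (∑ j, c j • bb j) = π a := by
        rw [map_sum]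
        simp only [map_smul]
        exact hc
      have hπs' : Submodule.Quotient.mk (p := I) a = Submodule.Quotient.mk (p := I) (∑ j, c j • bb j) := by
        rw [← Submodule.mkQ_apply, ← Submodule.mkQ_apply]
        exact hπs.symm
      exact (Submodule.Quotient.eq I).mp hπs'
    have hle := subset_B B hB hBdense I hIl hIc x hgen bb hbbB hsum
    apply hBproper
    rw [Submodule.eq_top_iff']
    intro a
    have : π a ∈ T := by rw [hTtop]; trivial
    obtain ⟨b, hbB, hbq⟩ := this
    have hab : a - b ∈ I := by
      have : Submodule.Quotient.mk (p := I) a = Submodule.Quotient.mk (p := I) b := by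
        rw [← Submodule.mkQ_apply, ← Submodule.mkQ_apply]
        exact hbq.symm
      exact (Submodule.Quotient.eq I).mp this
    have : a = b + (a - b) := by abel
    rw [this]
    exact Submodule.add_mem _ hbB (hle hab)
end main3

/-- Corollary 2.4: let `A` be a Banach algebra with a dense proper left ideal.  Then
(i) `A` has no finitely-generated closed maximal left ideals, and
(ii) `A` has no finitely-generated closed left ideals of finite codimension. -/
theorem stmt3 [NonUnitalNormedRing A] [NormedSpace ℂ A] [IsScalarTower ℂ A A]
    [SMulCommClass ℂ A A] [CompleteSpace A]
    (B : Submodule ℂ A) (hB : IsLeftIdeal B) (hBdense : Dense (B : Set A))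
    (hBproper : B ≠ ⊤) :
    (∀ I : Submodule ℂ A, IsLeftIdeal I → IsClosed (I : Set A) → I ≠ ⊤ →
      (∀ J : Submodule ℂ A, IsLeftIdeal J → I ≤ J → J = I ∨ J = ⊤) →
      ¬ IsFinGenLeftIdeal I)
    ∧
    (∀ I : Submodule ℂ A, IsLeftIdeal I → IsClosed (I : Set A) →
      FiniteDimensional ℂ (A ⧸ I) → ¬ IsFinGenLeftIdeal I) := by
  exact stmt3aux B hB hBdense hBproper
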